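/- Poincaré lemma for closed 1-forms on simply connected open sets (the step 'since M₁ is simply connected and dX♭ = 0, there is φ with X = ∇φ'): Let n ≥ 1, let U ⊆ ℝⁿ be open and simply connected, and let ω : ℝⁿ → (ℝⁿ →L[ℝ] ℂ) be a continuously differentiable (C¹ on U) ℂ-valued 1-form that is closed on U, in the sense that for every x ∈ U and all vectors v, w ∈ ℝⁿ one has (Dω(x)[v])(w) = (Dω(x)[w])(v). Then there exists a function φ : ℝⁿ → ℂ that is differentiable at every point of U with Dφ(x) = ω(x) for all x ∈ U. -/

import Mathlib

/-!
Primitives of `ω` exist locally (on balls, by the Poincaré lemma for convex sets), and two of them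
differ by a locally constant function. The values of local primitives therefore form a covering
space of `U` with discrete fibre `ℂ`, and since `U` is simply connected, the identity of `U` lifts
to a global section of this covering, which is a primitive of `ω` on all of `U`.
-/

open Set Filter Topology Metric WithTopology

section Gluing

variable {X G : Type*} [TopologicalSpace X] [AddCommGroup G]

/-- The chart with index `i` is defined on `V i`; in it, a point `v` of the fibre over `x` stands
for the value `v + ψ i x`. -/
def FiberBundleCore.ofLocallyConstantSub (V : X → Set X) (hV : ∀ x, IsOpen (V x))
    (hxV : ∀ x, x ∈ V x) (ψ : X → X → G)
    (hψ : ∀ i j, ∀ x ∈ V i ∩ V j, ∀ᶠ y in 𝓝 x, ψ i y - ψ j y = ψ i x - ψ j x) :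
    FiberBundleCore X X (WithDiscreteTopology G) where
  baseSet := V
  isOpen_baseSet := hV
  indexAt := id
  mem_baseSet_at := hxV
  coordChange i j x v := toTopology _ (ofTopology v + (ψ i x - ψ j x))
  coordChange_self i x _ v := by simp
  continuousOn_coordChange i j := by
    rintro ⟨x, v⟩ ⟨hx, -⟩
    refine (continuousAt_const (y := toTopology _ (ofTopology v + (ψ i x - ψ j x)))).congr ?_
      |>.continuousWithinAt
    have hv : ∀ᶠ p : X × WithDiscreteTopology G in 𝓝 (x, v), p.2 = v :=
      continuous_snd.continuousAt.eventually_mem (isOpen_discrete {v} |>.mem_nhds (mem_singleton v))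
    filter_upwards [hv, continuous_fst.continuousAt.eventually (hψ i j x hx)] with p hp hpψ
    simp [hp, hpψ]
  coordChange_comp i j k x _ v := by
    simp only [toTopology_inj]
    abel

theorem SimplyConnectedSpace.exists_forall_eventually_sub_eq [SimplyConnectedSpace X]
    [LocallyPathConnectedSpace X] (V : X → Set X) (hV : ∀ x, IsOpen (V x))
    (hxV : ∀ x, x ∈ V x) (ψ : X → X → G)
    (hψ : ∀ i j, ∀ x ∈ V i ∩ V j, ∀ᶠ y in 𝓝 x, ψ i y - ψ j y = ψ i x - ψ j x) :
    ∃ φ : X → G, ∀ x, ∀ᶠ y in 𝓝 x, φ y - ψ x y = φ x - ψ x x := by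
  set Z := FiberBundleCore.ofLocallyConstantSub V hV hxV ψ hψ
  obtain ⟨x₀⟩ : Nonempty X := inferInstance
  obtain ⟨s, -, hs⟩ := (FiberBundle.isCoveringMap (F := WithDiscreteTopology G) (E := Z.Fiber))
    |>.existsUnique_continuousMap_lifts (ContinuousMap.id X) x₀ ⟨x₀, toTopology _ 0⟩ rfl
    |>.exists
  have hs_proj (x : X) : (s x).proj = x := congrFun hs x
  refine ⟨fun x => ofTopology (s x).snd + ψ (s x).proj (s x).proj, fun x => ?_⟩
  have hs_chart (y : X) : ofTopology (Z.localTriv x (s y)).2 =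
      ofTopology (s y).snd + (ψ (s y).proj (s y).proj - ψ x (s y).proj) := rfl
  have hsx : s x ∈ (Z.localTriv x).source := by
    rw [Z.mem_localTriv_source, hs_proj]
    exact hxV x
  have hcont : ContinuousAt (fun y => (Z.localTriv x (s y)).2) x :=
    continuous_snd.continuousAt.comp <|
      ((Z.localTriv x).continuousAt hsx).comp s.continuous.continuousAt
  filter_upwards [hcont.eventually_mem (isOpen_discrete _ |>.mem_nhds (mem_singleton _))] with y hy
  replace hy := congrArg ofTopology (mem_singleton_iff.mp hy)
  rw [hs_chart, hs_chart, hs_proj, hs_proj] at hy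
  simpa only [hs_proj, add_sub_assoc] using hy

end Gluing

section Primitive

variable {E F : Type*} [NormedAddCommGroup E] [NormedSpace ℝ E] [NormedAddCommGroup F]
  [NormedSpace ℝ F]

theorem IsOpen.eventually_sub_eq_of_hasFDerivAt {s : Set E} (hs : IsOpen s) {f g : E → F}
    {f' : E → E →L[ℝ] F} (hf : ∀ y ∈ s, HasFDerivAt f (f' y) y)
    (hg : ∀ y ∈ s, HasFDerivAt g (f' y) y) {x : E} (hx : x ∈ s) :
    ∀ᶠ y in 𝓝 x, f y - g y = f x - g x := by
  obtain ⟨r, hr, hrs⟩ := isOpen_iff.mp hs x hx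
  filter_upwards [ball_mem_nhds x hr] with y hy
  have hfg : ∀ z ∈ ball x r, HasFDerivWithinAt (fun w => f w - g w) 0 (ball x r) z :=
    fun z hz => by simpa using ((hf z (hrs hz)).fun_sub (hg z (hrs hz))).hasFDerivWithinAt
  simpa [sub_eq_zero] using (convex_ball x r).norm_image_sub_le_of_norm_hasFDerivWithin_le hfg
    (C := 0) (by simp) (mem_ball_self hr) hy

theorem IsOpen.exists_forall_hasFDerivAt_of_forall_eventually {U : Set E} (hU : IsOpen U)
    [SimplyConnectedSpace U] {ω : E → E →L[ℝ] F}
    (hloc : ∀ x ∈ U, ∃ ψ : E → F, ∀ᶠ y in 𝓝 x, HasFDerivAt ψ (ω y) y) :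
    ∃ φ : E → F, ∀ x ∈ U, HasFDerivAt φ (ω x) x := by
  classical
  have hloc' (x : U) : ∃ ψ : E → F, ∃ t : Set E, IsOpen t ∧ (x : E) ∈ t ∧
      ∀ y ∈ t, HasFDerivAt ψ (ω y) y := by
    obtain ⟨ψ, hψ⟩ := hloc x x.2
    obtain ⟨t, ht, hto, hxt⟩ := _root_.eventually_nhds_iff.mp hψ
    exact ⟨ψ, t, hto, hxt, ht⟩
  choose ψ t hto hxt hψ using hloc'
  have : LocallyPathConnectedSpace U := hU.locallyPathConnectedSpace
  obtain ⟨φ, hφ⟩ := SimplyConnectedSpace.exists_forall_eventually_sub_eq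
    (fun x => Subtype.val ⁻¹' t x) (fun x => (hto x).preimage continuous_subtype_val) hxt
    (fun x y => ψ x y) fun i j z hz => continuous_subtype_val.continuousAt.eventually <|
      ((hto i).inter (hto j)).eventually_sub_eq_of_hasFDerivAt (fun y hy => hψ i y hy.1)
        (fun y hy => hψ j y hy.2) hz
  refine ⟨fun y => if hy : y ∈ U then φ ⟨y, hy⟩ else 0, fun x hx => ?_⟩
  refine ((hψ ⟨x, hx⟩ x (hxt _)).add_const (φ ⟨x, hx⟩ - ψ ⟨x, hx⟩ x)).congr_of_eventuallyEq ?_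
  rw [EventuallyEq, ← map_nhds_subtype_coe_eq_nhds hx (hU.mem_nhds hx), eventually_map]
  filter_upwards [hφ ⟨x, hx⟩] with y hy
  simp only [dif_pos y.2, ← hy]
  abel

end Primitive

theorem poincare_lemma_closed_one_form_general {n : ℕ}
    (U : Set (EuclideanSpace ℝ (Fin n))) (hU : IsOpen U)
    (hsc : SimplyConnectedSpace U)
    (ω : EuclideanSpace ℝ (Fin n) → (EuclideanSpace ℝ (Fin n) →L[ℝ] ℂ))
    (hω : ContDiffOn ℝ 1 ω U)
    (hclosed : ∀ x ∈ U, ∀ v w : EuclideanSpace ℝ (Fin n),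
      (fderiv ℝ ω x v) w = (fderiv ℝ ω x w) v) :
    ∃ φ : EuclideanSpace ℝ (Fin n) → ℂ, ∀ x ∈ U, HasFDerivAt φ (ω x) x := by
  refine hU.exists_forall_hasFDerivAt_of_forall_eventually fun x hx => ?_
  obtain ⟨r, hr, hrU⟩ := isOpen_iff.mp hU x hx
  obtain ⟨ψ, hψ⟩ := (convex_ball x r).exists_forall_hasFDerivAt_of_fderiv_symmetric isOpen_ball
    ((hω.differentiableOn one_ne_zero).mono hrU) fun y hy => hclosed y (hrU hy)
  exact ⟨ψ, eventually_of_mem (ball_mem_nhds x hr) hψ⟩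

/-- Poincaré lemma for closed complex-valued 1-forms on simply connected open subsets
of `ℝⁿ`: a `C¹` 1-form `ω` with symmetric derivative (`∂_j ω_k = ∂_k ω_j`) on a simply
connected open set `U` admits a primitive `φ` with `Dφ(x) = ω(x)` on `U`. -/
theorem poincare_lemma_closed_one_form {n : ℕ} (hn : 1 ≤ n)
    (U : Set (EuclideanSpace ℝ (Fin n))) (hU : IsOpen U)
    (hsc : SimplyConnectedSpace U)
    (ω : EuclideanSpace ℝ (Fin n) → (EuclideanSpace ℝ (Fin n) →L[ℝ] ℂ))
    (hω : ContDiffOn ℝ 1 ω U)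
    (hclosed : ∀ x ∈ U, ∀ v w : EuclideanSpace ℝ (Fin n),
      (fderiv ℝ ω x v) w = (fderiv ℝ ω x w) v) :
    ∃ φ : EuclideanSpace ℝ (Fin n) → ℂ, ∀ x ∈ U, HasFDerivAt φ (ω x) x :=
  poincare_lemma_closed_one_form_general U hU hsc ω hω hclosed
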